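/- arXiv:2106.00402 — 2 statements merged into one kernel-verified Lean document; each statement's English description precedes it below -/
import Mathlib

section
/- Let k ≥ 1 be an integer, S a nonempty subset of Fin k, and U a finite index set with |U| ≤ |S|. For each u ∈ U let A_u ⊆ Fin k with |A_u| ≥ 2, and let (c_u)_{u ∈ U} be independent random variables with c_u distributed uniformly on A_u. Let N = |{ i ∈ S : for all u ∈ U, c_u ≠ i }|. Then P(N ≥ |S|/5) ≥ 1/16. -/
open MeasureTheory ProbabilityTheory Finset Real
open scoped ENNReal

/-!
A colour `i ∈ S` is missed by everybody with probability `∏ᵤ (1 - qᵤ(i))`, where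
`qᵤ(i) = P(cᵤ = i) ≤ 1/2`. Since `1 - p ≥ 4⁻ᵖ` on `[0, 1/2]`, this is at least `4^(-tᵢ)` with
`tᵢ = ∑ᵤ qᵤ(i)`, and `∑_{i ∈ S} tᵢ ≤ |U| ≤ |S|`, so by convexity of `x ↦ 4⁻ˣ` the expected number
`E[N]` of missed colours is at least `|S|/4`. As `N ≤ |S|`, a reverse Markov inequality gives
`|S|/4 ≤ |S| p + (|S|/5)(1 - p)` for `p = P(N ≥ |S|/5)`, that is `p ≥ 1/16`.
-/

lemma exp_neg_mul_log_four_le_one_sub {p : ℝ} (hp₀ : 0 ≤ p) (hp : p ≤ 1 / 2) :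
    exp (-(p * log 4)) ≤ 1 - p := by
  have hlog : log 4 = 2 * log 2 := by
    rw [show (4 : ℝ) = 2 ^ 2 by norm_num, log_pow, Nat.cast_ofNat]
  calc exp (-(p * log 4)) = exp ((1 - 2 * p) • 0 + (2 * p) • -log 2) := by
        rw [hlog, smul_eq_mul, smul_eq_mul]; ring_nf
    _ ≤ (1 - 2 * p) • exp 0 + (2 * p) • exp (-log 2) :=
        convexOn_exp.2 (Set.mem_univ _) (Set.mem_univ _) (by linarith) (by linarith) (by ring)
    _ = 1 - p := by
        rw [exp_zero, exp_neg, exp_log two_pos, smul_eq_mul, smul_eq_mul]; ring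

lemma card_mul_exp_sum_div_card_le_sum_exp {ι : Type*} (s : Finset ι) (x : ι → ℝ) :
    #s * exp ((∑ i ∈ s, x i) / #s) ≤ ∑ i ∈ s, exp (x i) := by
  rcases s.eq_empty_or_nonempty with rfl | hs
  · simp
  have hcard : (0 : ℝ) < #s := by exact_mod_cast hs.card_pos
  have hjensen := convexOn_exp.map_sum_le (t := s) (w := fun _ ↦ (#s : ℝ)⁻¹) (p := x)
    (fun _ _ ↦ by positivity) (by simp [hcard.ne']) (fun _ _ ↦ Set.mem_univ _)
  simp only [smul_eq_mul, ← mul_sum] at hjensen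
  rw [div_eq_inv_mul]
  exact (le_inv_mul_iff₀ hcard).1 hjensen

lemma card_div_four_le_sum_prod_one_sub {ι κ : Type*} [Fintype κ] (s : Finset ι)
    (q : κ → ι → ℝ) (hq₀ : ∀ u i, 0 ≤ q u i) (hq : ∀ u i, q u i ≤ 1 / 2)
    (hsum : ∑ i ∈ s, ∑ u, q u i ≤ #s) :
    (#s : ℝ) / 4 ≤ ∑ i ∈ s, ∏ u, (1 - q u i) := by
  rcases s.eq_empty_or_nonempty with rfl | hs
  · simp
  have hcard : (0 : ℝ) < #s := by exact_mod_cast hs.card_pos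
  have hterm : ∀ i, exp (-((∑ u, q u i) * log 4)) ≤ ∏ u, (1 - q u i) := fun i ↦ by
    rw [sum_mul, ← sum_neg_distrib, exp_sum]
    exact prod_le_prod (fun _ _ ↦ (exp_pos _).le)
      fun u _ ↦ exp_neg_mul_log_four_le_one_sub (hq₀ u i) (hq u i)
  have hmean : -log 4 ≤ (∑ i ∈ s, -((∑ u, q u i) * log 4)) / #s := by
    rw [sum_neg_distrib, ← sum_mul, le_div_iff₀ hcard]
    nlinarith [log_nonneg (by norm_num : (1 : ℝ) ≤ 4)]
  calc (#s : ℝ) / 4 = #s * exp (-log 4) := by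
        rw [exp_neg, exp_log (by norm_num)]; ring
    _ ≤ #s * exp ((∑ i ∈ s, -((∑ u, q u i) * log 4)) / #s) := by gcongr
    _ ≤ ∑ i ∈ s, exp (-((∑ u, q u i) * log 4)) := card_mul_exp_sum_div_card_le_sum_exp _ _
    _ ≤ ∑ i ∈ s, ∏ u, (1 - q u i) := sum_le_sum fun i _ ↦ hterm i

section Counting

variable {Ω ι : Type*} (s : Finset ι) (P : ι → Ω → Prop) [∀ i ω, Decidable (P i ω)]

lemma natCast_card_filter_eq_sum_indicator (ω : Ω) :
    (#{i ∈ s | P i ω} : ℝ) = ∑ i ∈ s, {ω | P i ω}.indicator 1 ω := by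
  simp [Set.indicator_apply, sum_boole]

variable [MeasurableSpace Ω] {μ : Measure Ω} [IsProbabilityMeasure μ]

lemma integral_le_mul_measureReal_add {X : Ω → ℝ} {M : ℝ} (a : ℝ) (hX : Integrable X μ)
    (hXm : Measurable X) (hM : ∀ ω, X ω ≤ M) :
    ∫ ω, X ω ∂μ ≤ M * μ.real {ω | a ≤ X ω} + a * (1 - μ.real {ω | a ≤ X ω}) := by
  set A := {ω | a ≤ X ω}
  have hA : MeasurableSet A := measurableSet_le measurable_const hXm
  have hbound : ∀ ω, X ω ≤ A.indicator (fun _ ↦ M) ω + Aᶜ.indicator (fun _ ↦ a) ω := by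
    intro ω
    by_cases h : ω ∈ A
    · simp [h, hM ω]
    · simpa [h, Set.indicator_of_mem (Set.mem_compl h)] using (not_le.1 h).le
  calc ∫ ω, X ω ∂μ ≤ ∫ ω, A.indicator (fun _ ↦ M) ω + Aᶜ.indicator (fun _ ↦ a) ω ∂μ :=
        integral_mono hX (((integrable_const M).indicator hA).add
          ((integrable_const a).indicator hA.compl)) hbound
    _ = M * μ.real A + a * (1 - μ.real A) := by
        rw [integral_add ((integrable_const M).indicator hA)
          ((integrable_const a).indicator hA.compl), integral_indicator_const M hA,
          integral_indicator_const a hA.compl, probReal_compl_eq_one_sub hA, smul_eq_mul,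
          smul_eq_mul, mul_comm _ M, mul_comm _ a]

variable {s P}

lemma one_div_sixteen_le_measureReal_card_filter (hs : s.Nonempty)
    (hP : ∀ i, MeasurableSet {ω | P i ω})
    (hmean : (#s : ℝ) / 4 ≤ ∑ i ∈ s, μ.real {ω | P i ω}) :
    1 / 16 ≤ μ.real {ω | (#s : ℝ) / 5 ≤ #{i ∈ s | P i ω}} := by
  have hcard : (0 : ℝ) < #s := by exact_mod_cast hs.card_pos
  have hN : (fun ω ↦ (#{i ∈ s | P i ω} : ℝ)) = fun ω ↦ ∑ i ∈ s, {ω | P i ω}.indicator 1 ω :=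
    funext (natCast_card_filter_eq_sum_indicator s P)
  have hint : ∀ i ∈ s, Integrable ({ω | P i ω}.indicator (1 : Ω → ℝ)) μ :=
    fun i _ ↦ (integrable_const 1).indicator (hP i)
  have hexp : ∫ ω, (#{i ∈ s | P i ω} : ℝ) ∂μ = ∑ i ∈ s, μ.real {ω | P i ω} := by
    rw [hN, integral_finsetSum s hint]
    exact sum_congr rfl fun i _ ↦ integral_indicator_one (hP i)
  have hrev := integral_le_mul_measureReal_add (μ := μ) (M := #s) ((#s : ℝ) / 5)
    (hN ▸ integrable_finsetSum s hint)
    (hN ▸ Finset.measurable_sum s fun i _ ↦ measurable_const.indicator (hP i))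
    fun ω ↦ by exact_mod_cast card_filter_le s _
  rw [hexp] at hrev
  nlinarith [measureReal_nonneg (μ := μ) (s := {ω | (#s : ℝ) / 5 ≤ #{i ∈ s | P i ω}})]

end Counting

section Independence

variable {Ω ι β : Type*} [MeasurableSpace Ω] {μ : Measure Ω} [IsProbabilityMeasure μ]
  [MeasurableSpace β] [MeasurableSingletonClass β]

lemma sum_measureReal_eq_le_one {X : Ω → β} (hX : Measurable X) (s : Finset β) :
    ∑ b ∈ s, μ.real {ω | X ω = b} ≤ 1 :=
  (sum_measureReal_preimage_singleton s fun b _ ↦ hX (measurableSet_singleton b)).trans_le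
    measureReal_le_one

lemma ProbabilityTheory.iIndepFun.measureReal_forall_ne [Fintype ι] {c : ι → Ω → β}
    (hc : ∀ u, Measurable (c u)) (hindep : iIndepFun c μ) (b : β) :
    μ.real {ω | ∀ u, c u ω ≠ b} = ∏ u, (1 - μ.real {ω | c u ω = b}) := by
  have hset : {ω | ∀ u, c u ω ≠ b} = ⋂ u, c u ⁻¹' {b}ᶜ := by ext; simp
  rw [hset, measureReal_def,
    hindep.meas_iInter fun u ↦ ⟨_, (measurableSet_singleton b).compl, rfl⟩, ENNReal.toReal_prod]
  refine prod_congr rfl fun u _ ↦ ?_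
  rw [← measureReal_def, Set.preimage_compl,
    probReal_compl_eq_one_sub (hc u (measurableSet_singleton b))]
  rfl

end Independence

theorem prob_many_unchosen_colors_general
    {Ω : Type*} [MeasureSpace Ω] [IsProbabilityMeasure (ℙ : Measure Ω)]
    (k : ℕ) (S : Finset (Fin k)) (hS : S.Nonempty)
    (U : Type*) [Fintype U] (hU : Fintype.card U ≤ S.card)
    (A : U → Finset (Fin k)) (hA : ∀ u, 2 ≤ (A u).card)
    (c : U → Ω → Fin k) (hmeas : ∀ u, Measurable (c u))
    (hindep : iIndepFun c ℙ)
    (hunif : ∀ u, ∀ a : Fin k,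
      ℙ {ω | c u ω = a} = if a ∈ A u then ((A u).card : ℝ≥0∞)⁻¹ else 0) :
    1 / 16 ≤
      (ℙ {ω | (S.card : ℝ) / 5
        ≤ ((S.filter (fun i => ∀ u : U, c u ω ≠ i)).card : ℝ)}).toReal := by
  set q : U → Fin k → ℝ := fun u i ↦ (ℙ : Measure Ω).real {ω | c u ω = i}
  have hq_half : ∀ u i, q u i ≤ 1 / 2 := fun u i ↦ by
    simp only [q, measureReal_def, hunif u i]
    split_ifs
    · rw [ENNReal.toReal_inv, ENNReal.toReal_natCast, one_div]
      exact inv_anti₀ two_pos (by exact_mod_cast hA u)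
    · norm_num
  have hq_total : ∑ i ∈ S, ∑ u, q u i ≤ #S := by
    rw [sum_comm]
    calc ∑ u, ∑ i ∈ S, q u i ≤ ∑ _u : U, (1 : ℝ) :=
          sum_le_sum fun u _ ↦ sum_measureReal_eq_le_one (hmeas u) S
      _ ≤ #S := by simpa using (by exact_mod_cast hU : (Fintype.card U : ℝ) ≤ #S)
  refine one_div_sixteen_le_measureReal_card_filter hS (fun i ↦ ?_) ?_
  · simp only [ne_eq, Set.ofPred_forall]
    exact MeasurableSet.iInter fun u ↦ (hmeas u (measurableSet_singleton i)).compl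
  · simp_rw [hindep.measureReal_forall_ne hmeas]
    exact card_div_four_le_sum_prod_one_sub S q (fun _ _ ↦ measureReal_nonneg) hq_half hq_total

/-- Lemma 1 of the paper: if `|U| ≤ |S|` and each `c u` is uniform on a set `A u` of
at least two colors, independently, then with probability at least `1/16` the number
of colors of `S` chosen by no `c u` is at least `|S|/5`. -/
theorem prob_many_unchosen_colors
    {Ω : Type*} [MeasureSpace Ω] [IsProbabilityMeasure (ℙ : Measure Ω)]
    (k : ℕ) (hk : 1 ≤ k) (S : Finset (Fin k)) (hS : S.Nonempty)
    (U : Type*) [Fintype U] (hU : Fintype.card U ≤ S.card)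
    (A : U → Finset (Fin k)) (hA : ∀ u, 2 ≤ (A u).card)
    (c : U → Ω → Fin k) (hmeas : ∀ u, Measurable (c u))
    (hindep : iIndepFun c ℙ)
    (hunif : ∀ u, ∀ a : Fin k,
      ℙ {ω | c u ω = a} = if a ∈ A u then ((A u).card : ℝ≥0∞)⁻¹ else 0) :
    1 / 16 ≤
      (ℙ {ω | (S.card : ℝ) / 5
        ≤ ((S.filter (fun i => ∀ u : U, c u ω ≠ i)).card : ℝ)}).toReal :=
  prob_many_unchosen_colors_general k S hS U hU A hA c hmeas hindep hunif
end

section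
/- Let k ≥ 1 be an integer, A a nonempty subset of Fin k, and i₀ ∈ A. Let S and D be disjoint finite index sets, and for each u ∈ S ∪ D let A_u ⊆ Fin k with |A_u| ≥ 2. Assume that for every u ∈ D: i₀ ∉ A_u and A_u is not contained in A (i.e. there exists j ∈ A_u with j ∉ A). Then (1/|A|) · Σ_{i ∈ A} Π_{u ∈ S ∪ D with i ∈ A_u} (1 − 1/|A_u|) ≥ 4^{−|S|/|A|} · e^{−|D|/|A|}, where the exponents |S|/|A| and |D|/|A| are real numbers. -/
/-!
By AM–GM the average of the products is at least their geometric mean, and swapping the two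
products writes `∏_{i ∈ A} ∏_{u ∋ i}` as `∏_u (1 - 1/|A_u|) ^ |A ∩ A_u|`. For `u ∈ S` the
exponent is at most `|A_u|`, and `(1 - 1/n) ^ n ≥ 1/4` for `n ≥ 2`; for `u ∈ D` some color of
`A_u` lies outside `A`, so the exponent is at most `|A_u| - 1`, and `(1 - 1/n) ^ (n - 1) ≥ e⁻¹`.
-/

open Real Finset

lemma one_sub_one_div_natCast_nonneg (n : ℕ) : 0 ≤ 1 - 1 / (n : ℝ) := by
  rcases n.eq_zero_or_pos with rfl | hn
  · simp
  · exact sub_nonneg.2 (div_le_one_of_le₀ (by exact_mod_cast hn) n.cast_nonneg)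

lemma one_sub_one_div_natCast_le_one (n : ℕ) : 1 - 1 / (n : ℝ) ≤ 1 :=
  sub_le_self _ (by positivity)

lemma four_rpow_neg_le_one_sub {x : ℝ} (hx₀ : 0 ≤ x) (hx : x ≤ 1 / 2) :
    (4 : ℝ) ^ (-x) ≤ 1 - x := by
  have h_half : (4 : ℝ) ^ (-(1 / 2) : ℝ) = 1 / 2 := by
    rw [show (4 : ℝ) = 2 ^ (2 : ℝ) by norm_num, ← rpow_mul (by norm_num)]
    norm_num
  -- `4 ^ (-x)` is convex and agrees with `1 - x` at `x = 0` and `x = 1 / 2`.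
  have := (convexOn_rpow_left (by norm_num : (0 : ℝ) < 4)).2 (Set.mem_univ 0)
    (Set.mem_univ (-(1 / 2))) (by linarith : 0 ≤ 1 - 2 * x) (by linarith : 0 ≤ 2 * x)
    (by ring)
  simp only [smul_eq_mul, h_half, rpow_zero] at this
  rwa [show (1 - 2 * x) * 0 + 2 * x * -(1 / 2) = -x by ring,
    show (1 - 2 * x) * 1 + 2 * x * (1 / 2) = 1 - x by ring] at this

lemma quarter_le_one_sub_one_div_pow {n m : ℕ} (hn : 2 ≤ n) (hm : m ≤ n) :
    1 / 4 ≤ (1 - 1 / (n : ℝ)) ^ m := by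
  have hn₀ : (0 : ℝ) < n := by positivity
  calc (1 / 4 : ℝ) = ((4 : ℝ) ^ (-(1 / (n : ℝ)))) ^ n := by
        rw [← rpow_natCast, ← rpow_mul (by norm_num), neg_mul, one_div_mul_cancel hn₀.ne',
          rpow_neg_one, one_div]
    _ ≤ (1 - 1 / (n : ℝ)) ^ n := by
        gcongr
        apply four_rpow_neg_le_one_sub (by positivity)
        rw [div_le_div_iff₀ hn₀ two_pos]
        exact_mod_cast (by omega : 1 * 2 ≤ 1 * n)
    _ ≤ (1 - 1 / (n : ℝ)) ^ m :=
        pow_le_pow_of_le_one (one_sub_one_div_natCast_nonneg n)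
          (one_sub_one_div_natCast_le_one n) hm

lemma exp_neg_one_le_one_sub_one_div_pow {n m : ℕ} (hm : m < n) :
    exp (-1) ≤ (1 - 1 / (n : ℝ)) ^ m := by
  obtain ⟨n, rfl⟩ : ∃ l, n = l + 1 := ⟨n - 1, by omega⟩
  rcases n.eq_zero_or_pos with rfl | hn
  · simp [Nat.lt_one_iff.1 hm]
  have hbase : (1 - 1 / ((n + 1 : ℕ) : ℝ)) = (1 + (n : ℝ)⁻¹)⁻¹ := by
    field_simp
    push_cast
    ring
  calc exp (-1) ≤ ((1 + (n : ℝ)⁻¹) ^ n)⁻¹ := by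
        rw [exp_neg]
        exact inv_anti₀ (by positivity) one_add_inv_pow_le_exp
    _ = (1 - 1 / ((n + 1 : ℕ) : ℝ)) ^ n := by rw [hbase, inv_pow]
    _ ≤ (1 - 1 / ((n + 1 : ℕ) : ℝ)) ^ m :=
        pow_le_pow_of_le_one (one_sub_one_div_natCast_nonneg _)
          (one_sub_one_div_natCast_le_one _) (by omega)

lemma Finset.prod_prod_filter_mem_eq_prod_pow_card_inter {ι κ M : Type*} [CommMonoid M]
    [DecidableEq ι] (A : Finset ι) (T : Finset κ) (B : κ → Finset ι) (f : κ → M) :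
    ∏ i ∈ A, ∏ u ∈ T with i ∈ B u, f u = ∏ u ∈ T, f u ^ #(A ∩ B u) := by
  simp_rw [prod_filter]
  rw [prod_comm]
  refine prod_congr rfl fun u _ => ?_
  rw [← prod_filter, filter_mem_eq_inter, prod_const]

lemma Finset.card_inter_lt_card_of_not_subset {ι : Type*} [DecidableEq ι] {A B : Finset ι}
    (h : ¬ B ⊆ A) : #(A ∩ B) < #B :=
  card_lt_card ⟨inter_subset_right, fun h' => h (h'.trans inter_subset_left)⟩

lemma Real.prod_rpow_one_div_card_le_one_div_card_mul_sum {ι : Type*} {s : Finset ι}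
    (hs : s.Nonempty) {z : ι → ℝ} (hz : ∀ i ∈ s, 0 ≤ z i) :
    (∏ i ∈ s, z i) ^ (1 / (#s : ℝ)) ≤ 1 / (#s : ℝ) * ∑ i ∈ s, z i := by
  have := geom_mean_le_arith_mean s 1 z (fun _ _ => zero_le_one)
    (by simpa using hs.card_pos) hz
  simpa only [Pi.one_apply, rpow_one, one_mul, sum_const, nsmul_eq_mul, mul_one, one_div,
    div_eq_inv_mul] using this

theorem average_escape_probability_general
    (k : ℕ) (A : Finset (Fin k)) (hA : A.Nonempty)
    (i₀ : Fin k)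
    (U : Type*) [DecidableEq U] (S D : Finset U) (hSD : Disjoint S D)
    (Au : U → Finset (Fin k)) (h2 : ∀ u ∈ S ∪ D, 2 ≤ (Au u).card)
    (hD : ∀ u ∈ D, i₀ ∉ Au u ∧ ∃ j ∈ Au u, j ∉ A) :
    (1 / (A.card : ℝ)) *
        ∑ i ∈ A, ∏ u ∈ (S ∪ D).filter (fun u => i ∈ Au u),
          ((1 : ℝ) - 1 / ((Au u).card : ℝ))
      ≥ (4 : ℝ) ^ (-(S.card : ℝ) / A.card) *
          Real.exp (-(D.card : ℝ) / A.card) := by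
  set f : U → ℝ := fun u => 1 - 1 / ((Au u).card : ℝ)
  have hS_factor : ∀ u ∈ S, 1 / 4 ≤ f u ^ #(A ∩ Au u) := fun u hu =>
    quarter_le_one_sub_one_div_pow (h2 u (mem_union_left _ hu)) (card_le_card inter_subset_right)
  have hD_factor : ∀ u ∈ D, exp (-1) ≤ f u ^ #(A ∩ Au u) := fun u hu =>
    exp_neg_one_le_one_sub_one_div_pow
      (card_inter_lt_card_of_not_subset (not_subset.2 (hD u hu).2))
  have hprod : (1 / 4 : ℝ) ^ #S * exp (-1) ^ #D ≤ ∏ i ∈ A, ∏ u ∈ S ∪ D with i ∈ Au u, f u := by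
    rw [prod_prod_filter_mem_eq_prod_pow_card_inter, prod_union hSD, ← prod_const, ← prod_const]
    exact mul_le_mul (prod_le_prod (fun _ _ => by positivity) hS_factor)
      (prod_le_prod (fun _ _ => by positivity) hD_factor) (by positivity)
      (prod_nonneg fun u _ => pow_nonneg (one_sub_one_div_natCast_nonneg _) _)
  calc (4 : ℝ) ^ (-(#S : ℝ) / #A) * exp (-(#D : ℝ) / #A)
      = ((1 / 4 : ℝ) ^ #S * exp (-1) ^ #D) ^ (1 / (#A : ℝ)) := by
        rw [mul_rpow (by positivity) (by positivity), ← rpow_natCast, ← rpow_mul (by norm_num),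
          ← exp_nat_mul, ← exp_mul, one_div 4, inv_rpow (by norm_num), ← rpow_neg (by norm_num)]
        ring_nf
    _ ≤ (∏ i ∈ A, ∏ u ∈ S ∪ D with i ∈ Au u, f u) ^ (1 / (#A : ℝ)) := by gcongr
    _ ≤ _ := Real.prod_rpow_one_div_card_le_one_div_card_mul_sum hA fun i _ =>
        prod_nonneg fun u _ => one_sub_one_div_natCast_nonneg _

/-- The averaging inequality at the core of Lemma 2: with `A` the available colors of
a player, `i₀ ∈ A` her current color, and `A u` the available colors of her unhappy
neighbors `u ∈ S ∪ D` (where each `u ∈ D` satisfies `i₀ ∉ A u` and `A u ⊄ A`), the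
average over `i ∈ A` of `∏_{u ∈ S ∪ D, i ∈ A u} (1 - 1/|A u|)` is at least
`4^(-|S|/|A|) * e^(-|D|/|A|)`. -/
theorem average_escape_probability
    (k : ℕ) (hk : 1 ≤ k) (A : Finset (Fin k)) (hA : A.Nonempty)
    (i₀ : Fin k) (hi₀ : i₀ ∈ A)
    (U : Type*) [DecidableEq U] (S D : Finset U) (hSD : Disjoint S D)
    (Au : U → Finset (Fin k)) (h2 : ∀ u ∈ S ∪ D, 2 ≤ (Au u).card)
    (hD : ∀ u ∈ D, i₀ ∉ Au u ∧ ∃ j ∈ Au u, j ∉ A) :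
    (1 / (A.card : ℝ)) *
        ∑ i ∈ A, ∏ u ∈ (S ∪ D).filter (fun u => i ∈ Au u),
          ((1 : ℝ) - 1 / ((Au u).card : ℝ))
      ≥ (4 : ℝ) ^ (-(S.card : ℝ) / A.card) *
          Real.exp (-(D.card : ℝ) / A.card) :=
  average_escape_probability_general k A hA i₀ U S D hSD Au h2 hD
end
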